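/- arXiv:2407.19358 — 3 statements merged into one kernel-verified Lean document; each statement's English description precedes it below -/
import Mathlib

section
/- Let F : C ⥤ D be a discrete opfibration. Then F is injective on objects and on morphisms if and only if F is faithful and full on isomorphisms (i.e., every isomorphism F(c) ≅ F(c') in D is the image of an isomorphism c ≅ c' in C). -/
open CategoryTheory

/-- A functor `P` is a discrete opfibration if every morphism out of the image of an
object `x` has a unique lift with domain `x`. -/
def IsDiscreteOpfibration {E B : Type*} [Category E] [Category B] (P : E ⥤ B) : Prop :=
  ∀ ⦃e : E⦄ ⦃b : B⦄ (u : P.obj e ⟶ b),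
    ∃! p : (y : E) × (e ⟶ y), ∃ h : P.obj p.1 = b, P.map p.2 = u ≫ eqToHom h.symm

namespace IsDiscreteOpfibration

variable {C D : Type*} [Category C] [Category D] {F : C ⥤ D}

theorem sigma_eq_of_map_comp_eqToHom (hF : IsDiscreteOpfibration F) {c y z : C}
    (u : c ⟶ y) (v : c ⟶ z) (h : F.obj y = F.obj z) (huv : F.map u ≫ eqToHom h = F.map v) :
    (⟨y, u⟩ : (y : C) × (c ⟶ y)) = ⟨z, v⟩ :=
  (hF (F.map v)).unique ⟨h, by simp [← huv]⟩ ⟨rfl, by simp⟩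

theorem faithful (hF : IsDiscreteOpfibration F) : F.Faithful where
  map_injective {_ _} u v huv :=
    sigma_mk_injective (hF.sigma_eq_of_map_comp_eqToHom u v rfl (by simpa using huv))

theorem full_of_injective_obj (hF : IsDiscreteOpfibration F)
    (hobj : Function.Injective F.obj) : F.Full where
  map_surjective {c c'} f := by
    obtain ⟨⟨y, u⟩, ⟨h, hu⟩, -⟩ := hF f
    obtain rfl : y = c' := hobj h
    exact ⟨u, by simpa using hu⟩

/-- An isomorphism lifting `eqToHom h` and the identity are two lifts of the same morphism,
so their codomains agree. -/
theorem injective_obj_of_mapIso_surjective (hF : IsDiscreteOpfibration F)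
    (hiso : ∀ (c c' : C) (e : F.obj c ≅ F.obj c'), ∃ e' : c ≅ c', F.mapIso e' = e) :
    Function.Injective F.obj := by
  intro c c' h
  obtain ⟨e', he'⟩ := hiso c c' (eqToIso h)
  have hmap : F.map e'.hom = eqToHom h := congrArg Iso.hom he'
  exact congrArg Sigma.fst
    (hF.sigma_eq_of_map_comp_eqToHom (𝟙 c) e'.hom h (by simp [hmap]))

end IsDiscreteOpfibration

theorem CategoryTheory.Functor.sigma_map_injective {C D : Type*} [Category C] [Category D]
    (F : C ⥤ D) [F.Faithful] (hobj : Function.Injective F.obj) :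
    Function.Injective
      (fun p : (c : C) × (c' : C) × (c ⟶ c') =>
        (⟨F.obj p.1, F.obj p.2.1, F.map p.2.2⟩ : (d : D) × (d' : D) × (d ⟶ d'))) := by
  rintro ⟨c, c', f⟩ ⟨d, d', g⟩ h
  obtain ⟨hcd, h⟩ := Sigma.mk.inj_iff.mp h
  obtain rfl : c = d := hobj hcd
  obtain ⟨hcd', h⟩ := Sigma.mk.inj_iff.mp (eq_of_heq h)
  obtain rfl : c' = d' := hobj hcd'
  obtain rfl : f = g := F.map_injective (eq_of_heq h)
  rfl

/-- For a discrete opfibration `F`, injectivity on objects and morphisms is equivalent to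
being faithful and full on isomorphisms. -/
theorem dof_injective_iff_faithful_and_full_on_isos
    {C D : Type*} [Category C] [Category D] (F : C ⥤ D)
    (hF : IsDiscreteOpfibration F) :
    (Function.Injective F.obj ∧
      Function.Injective
        (fun p : (c : C) × (c' : C) × (c ⟶ c') =>
          (⟨F.obj p.1, F.obj p.2.1, F.map p.2.2⟩ : (d : D) × (d' : D) × (d ⟶ d')))) ↔
    ((∀ ⦃c c' : C⦄ (f g : c ⟶ c'), F.map f = F.map g → f = g) ∧
      (∀ (c c' : C) (e : F.obj c ≅ F.obj c'), ∃ e' : c ≅ c', F.mapIso e' = e)) := by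
  have := hF.faithful
  constructor
  · rintro ⟨hobj, -⟩
    have := hF.full_of_injective_obj hobj
    exact ⟨fun _ _ _ _ h => F.map_injective h,
      fun _ _ e => ⟨F.preimageIso e, Iso.ext (F.map_preimage e.hom)⟩⟩
  · rintro ⟨-, hiso⟩
    have hobj := hF.injective_obj_of_mapIso_surjective hiso
    exact ⟨hobj, F.sigma_map_injective hobj⟩
end

section
/- Let F : J ⥤ J' be a functor which is injective on objects, and let X be a category. Then the precomposition functor F* : Fun(J', X) ⥤ Fun(J, X), sending H to F ⋙ H, is an isofibration: for every H : J' ⥤ X and every natural isomorphism φ : F ⋙ H ≅ K, there exist H' : J' ⥤ X and a natural isomorphism ψ : H ≅ H' with F ⋙ H' = K and with the whiskering of ψ by F equal to φ. -/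
open CategoryTheory

namespace PrecompIsofib

open Classical

variable {J J' X : Type*} [Category J] [Category J'] [Category X]
  (F : J ⥤ J') (hF : Function.Injective F.obj)
  (H : J' ⥤ X) (K : J ⥤ X) (φ : F ⋙ H ≅ K)

noncomputable def Hobj (j' : J') : X :=
  if h : ∃ j, F.obj j = j' then K.obj h.choose else H.obj j'

noncomputable def e (j' : J') : H.obj j' ≅ Hobj F H K j' :=
  if h : ∃ j, F.obj j = j' then
    eqToIso (congrArg H.obj h.choose_spec.symm) ≪≫ φ.app h.choose ≪≫
      eqToIso (by simp only [Hobj]; rw [dif_pos h])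
  else eqToIso (by simp only [Hobj]; rw [dif_neg h])

include hF in
lemma Hobj_Fobj (j : J) : Hobj F H K (F.obj j) = K.obj j := by
  have h : ∃ j0, F.obj j0 = F.obj j := ⟨j, rfl⟩
  have hc : h.choose = j := hF h.choose_spec
  simp [Hobj, dif_pos h, hc]

lemma e_aux (a b : J) (hab : a = b) (p : H.obj (F.obj b) = H.obj (F.obj a))
    (q : K.obj a = Hobj F H K (F.obj b)) (r : Hobj F H K (F.obj b) = K.obj b) :
    (eqToIso p ≪≫ φ.app a ≪≫ eqToIso q).hom ≫ eqToHom r = φ.hom.app b := by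
  subst hab; simp

include hF in
lemma e_comp (j : J) :
    (e F H K φ (F.obj j)).hom ≫ eqToHom (Hobj_Fobj F hF H K j) = φ.hom.app j := by
  have h : ∃ j0, F.obj j0 = F.obj j := ⟨j, rfl⟩
  have hc : h.choose = j := hF h.choose_spec
  rw [e, dif_pos h]
  exact e_aux F H K φ h.choose j hc _ _ _

noncomputable def H' : J' ⥤ X where
  obj := Hobj F H K
  map f := (e F H K φ _).inv ≫ H.map f ≫ (e F H K φ _).hom
  map_id _ := by simp
  map_comp _ _ := by simp

noncomputable def ψ : H ≅ H' F H K φ :=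
  NatIso.ofComponents (e F H K φ) (by intros; simp [H'])

include hF in
lemma comp_eq : F ⋙ H' F H K φ = K := by
  refine CategoryTheory.Functor.ext (fun j => Hobj_Fobj F hF H K j) ?_
  intro a b f
  have ha := e_comp F hF H K φ a
  have hb := e_comp F hF H K φ b
  have ha' : (e F H K φ (F.obj a)).hom = φ.hom.app a ≫ eqToHom (Hobj_Fobj F hF H K a).symm := by
    rw [← ha]; simp
  have hinv : (e F H K φ (F.obj a)).inv = eqToHom (Hobj_Fobj F hF H K a) ≫ φ.inv.app a := by
    have heq : e F H K φ (F.obj a) = φ.app a ≪≫ eqToIso (Hobj_Fobj F hF H K a).symm :=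
      Iso.ext ha'
    rw [heq]; simp
  have hb' : (e F H K φ (F.obj b)).hom = φ.hom.app b ≫ eqToHom (Hobj_Fobj F hF H K b).symm := by
    rw [← hb]; simp
  show (e F H K φ (F.obj a)).inv ≫ H.map (F.map f) ≫ (e F H K φ (F.obj b)).hom = _
  rw [hinv, hb']
  have hnat := φ.inv.naturality f
  simp only [Functor.comp_map] at hnat
  simp only [Category.assoc]
  rw [← reassoc_of% hnat]
  simp
  rfl

end PrecompIsofib

/-- Precomposition with a functor that is injective on objects is an isofibration of
functor categories. -/
theorem precomposition_isofibration
    {J J' X : Type*} [Category J] [Category J'] [Category X]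
    (F : J ⥤ J') (hF : Function.Injective F.obj)
    (H : J' ⥤ X) (K : J ⥤ X) (φ : F ⋙ H ≅ K) :
    ∃ (H' : J' ⥤ X) (ψ : H ≅ H') (h : F ⋙ H' = K),
      Functor.isoWhiskerLeft F ψ ≪≫ eqToIso h = φ := by
  refine ⟨PrecompIsofib.H' F H K φ, PrecompIsofib.ψ F H K φ,
    PrecompIsofib.comp_eq F hF H K φ, ?_⟩
  ext j
  have := PrecompIsofib.e_comp F hF H K φ j
  simp [PrecompIsofib.ψ, eqToHom_app]
  exact this
end

section
/- Uniqueness of the DOF-collapse: let P' : E' ⥤ B be a setoidal opfibration, let P₁ : E₁ ⥤ B and P₂ : E₂ ⥤ B be discrete opfibrations, and let g₁ : E' ⥤ E₁ and g₂ : E' ⥤ E₂ be equivalences of categories with g₁ ⋙ P₁ = P' and g₂ ⋙ P₂ = P'. Suppose moreover each gᵢ is part of an equivalence over B in the sense that there exist fᵢ : Eᵢ ⥤ E' with fᵢ ⋙ gᵢ = 𝟭_{Eᵢ}, fᵢ ⋙ P' = Pᵢ, and a natural isomorphism βᵢ : gᵢ ⋙ fᵢ ≅ 𝟭_{E'} with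 P' sending every component of βᵢ to an identity. Then there is a unique functor h : E₁ ⥤ E₂ with g₁ ⋙ h = g₂; moreover h is an isomorphism of categories and satisfies h ⋙ P₂ = P₁. -/
open CategoryTheory

/-- A functor `P` is a setoidal opfibration if it is faithful, lifts exist, and any two
lifts of the same morphism are connected by a vertical morphism. -/
def IsSetoidalOpfibration {X Y : Type*} [Category X] [Category Y] (P : X ⥤ Y) : Prop :=
  (∀ ⦃x x' : X⦄ (f g : x ⟶ x'), P.map f = P.map g → f = g) ∧
  (∀ (x : X) (b : Y) (u : P.obj x ⟶ b),
    ∃ (y : X) (v : x ⟶ y) (h : P.obj y = b), P.map v = u ≫ eqToHom h.symm) ∧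
  (∀ (x y y' : X) (v : x ⟶ y) (v' : x ⟶ y') (h : P.obj y = P.obj y'),
    P.map v ≫ eqToHom h = P.map v' →
    ∃ w : y ⟶ y', v ≫ w = v' ∧ P.map w = eqToHom h)

/-- In a discrete opfibration, vertical morphisms are (eqToHom) identities. -/
lemma dof_vertical_eq {E B : Type*} [Category E] [Category B] {P : E ⥤ B}
    (hP : IsDiscreteOpfibration P) {x y : E} (m : x ⟶ y) (h : P.obj x = P.obj y)
    (hm : P.map m = eqToHom h) : ∃ e : x = y, m = eqToHom e := by
  obtain ⟨p, hp, hu⟩ := hP (eqToHom h : P.obj x ⟶ P.obj y)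
  have h1 : (⟨y, m⟩ : (z : E) × (x ⟶ z)) = p := hu _ ⟨rfl, by simp [hm]⟩
  have h2 : (⟨x, 𝟙 x⟩ : (z : E) × (x ⟶ z)) = p := hu _ ⟨h, by simp⟩
  have h3 := h1.trans h2.symm
  have hfst : y = x := congrArg Sigma.fst h3
  refine ⟨hfst.symm, ?_⟩
  subst hfst
  have := (Sigma.mk.inj_iff.mp h3).2
  simpa using eq_of_heq this

/-- If `β : F ≅ 𝟭` is vertical over `P'` and `g ⋙ P = P'` with `P` a discrete
opfibration, then `F ⋙ g = g`. -/
lemma comp_eq_of_vertical_iso {E' E B : Type*} [Category E'] [Category E] [Category B]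
    {P' : E' ⥤ B} {P : E ⥤ B} (hP : IsDiscreteOpfibration P)
    (g : E' ⥤ E) (hgP : g ⋙ P = P') (F : E' ⥤ E') (β : F ≅ 𝟭 E')
    (hβ : ∀ e' : E', ∃ h : P'.obj (F.obj e') = P'.obj e', P'.map (β.hom.app e') = eqToHom h) :
    F ⋙ g = g := by
  subst hgP
  have key : ∀ e' : E', ∃ e : g.obj (F.obj e') = g.obj e',
      g.map (β.hom.app e') = eqToHom e := by
    intro e'
    obtain ⟨h, hm⟩ := hβ e'
    exact dof_vertical_eq hP (g.map (β.hom.app e')) h hm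
  refine CategoryTheory.Functor.ext (h_obj := fun e' => (key e').choose) (h_map := ?_)
  intro x y m
  have hnat : F.map m ≫ β.hom.app y = β.hom.app x ≫ m := β.hom.naturality m
  have := congrArg g.map hnat
  rw [g.map_comp, g.map_comp, (key x).choose_spec, (key y).choose_spec] at this
  simp only [Functor.comp_map]
  rw [← Category.assoc, ← this]
  simp

/-- Uniqueness of the DOF-collapse of a setoidal opfibration. -/
theorem dof_collapse_unique
    {E' E₁ E₂ B : Type*} [Category E'] [Category E₁] [Category E₂] [Category B]
    (P' : E' ⥤ B) (P₁ : E₁ ⥤ B) (P₂ : E₂ ⥤ B)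
    (hP' : IsSetoidalOpfibration P')
    (hP₁ : IsDiscreteOpfibration P₁) (hP₂ : IsDiscreteOpfibration P₂)
    (g₁ : E' ⥤ E₁) (g₂ : E' ⥤ E₂)
    (hg₁ : g₁.IsEquivalence) (hg₂ : g₂.IsEquivalence)
    (hg₁P : g₁ ⋙ P₁ = P') (hg₂P : g₂ ⋙ P₂ = P')
    (hf₁ : ∃ (f₁ : E₁ ⥤ E'), f₁ ⋙ g₁ = 𝟭 E₁ ∧ f₁ ⋙ P' = P₁ ∧
      ∃ β₁ : g₁ ⋙ f₁ ≅ 𝟭 E', ∀ e' : E',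
        ∃ h : P'.obj ((g₁ ⋙ f₁).obj e') = P'.obj e', P'.map (β₁.hom.app e') = eqToHom h)
    (hf₂ : ∃ (f₂ : E₂ ⥤ E'), f₂ ⋙ g₂ = 𝟭 E₂ ∧ f₂ ⋙ P' = P₂ ∧
      ∃ β₂ : g₂ ⋙ f₂ ≅ 𝟭 E', ∀ e' : E',
        ∃ h : P'.obj ((g₂ ⋙ f₂).obj e') = P'.obj e', P'.map (β₂.hom.app e') = eqToHom h) :
    (∃! h : E₁ ⥤ E₂, g₁ ⋙ h = g₂) ∧
    ∀ h : E₁ ⥤ E₂, g₁ ⋙ h = g₂ →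
      ((∃ h' : E₂ ⥤ E₁, h ⋙ h' = 𝟭 E₁ ∧ h' ⋙ h = 𝟭 E₂) ∧ h ⋙ P₂ = P₁) := by
  obtain ⟨f₁, hf₁g, hf₁P, β₁, hβ₁⟩ := hf₁
  obtain ⟨f₂, hf₂g, hf₂P, β₂, hβ₂⟩ := hf₂
  -- (g₁ ⋙ f₁) ⋙ g₂ = g₂ and (g₂ ⋙ f₂) ⋙ g₁ = g₁
  have key₂ : (g₁ ⋙ f₁) ⋙ g₂ = g₂ := comp_eq_of_vertical_iso hP₂ g₂ hg₂P _ β₁ hβ₁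
  have key₁ : (g₂ ⋙ f₂) ⋙ g₁ = g₁ := comp_eq_of_vertical_iso hP₁ g₁ hg₁P _ β₂ hβ₂
  have hexist : g₁ ⋙ (f₁ ⋙ g₂) = g₂ := key₂
  have huniq : ∀ h : E₁ ⥤ E₂, g₁ ⋙ h = g₂ → h = f₁ ⋙ g₂ := by
    intro h hh
    calc h = (f₁ ⋙ g₁) ⋙ h := by rw [hf₁g]; rfl
    _ = f₁ ⋙ (g₁ ⋙ h) := rfl
    _ = f₁ ⋙ g₂ := by rw [hh]
  refine ⟨⟨f₁ ⋙ g₂, hexist, huniq⟩, ?_⟩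
  intro h hh
  have hh' : h = f₁ ⋙ g₂ := huniq h hh
  subst hh'
  refine ⟨⟨f₂ ⋙ g₁, ?_, ?_⟩, ?_⟩
  · calc (f₁ ⋙ g₂) ⋙ (f₂ ⋙ g₁) = f₁ ⋙ ((g₂ ⋙ f₂) ⋙ g₁) := rfl
    _ = f₁ ⋙ g₁ := by rw [key₁]
    _ = 𝟭 E₁ := hf₁g
  · calc (f₂ ⋙ g₁) ⋙ (f₁ ⋙ g₂) = f₂ ⋙ ((g₁ ⋙ f₁) ⋙ g₂) := rfl
    _ = f₂ ⋙ g₂ := by rw [key₂]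
    _ = 𝟭 E₂ := hf₂g
  · calc (f₁ ⋙ g₂) ⋙ P₂ = f₁ ⋙ (g₂ ⋙ P₂) := rfl
    _ = f₁ ⋙ P' := by rw [hg₂P]
    _ = P₁ := hf₁P
end
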